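/- Let W be a finite antipodal set in ℝ^k whose affine span has dimension k′ (where k′ ≤ k). Then W has at most 2^{k′} elements. -/

import Mathlib

/-!
Danzer–Grünbaum argument: if `W` affinely spans `E` and `K` is its convex hull, the half-size
copies `(K + w) / 2`, `w ∈ W`, lie in `K`, and for `x ≠ y` the copies at `x` and `y` lie on
opposite sides of the hyperplane `f = (f x + f y) / 2`, where `f` is the functional witnessing
antipodality of `x, y`. Comparing Haar measures gives `#W * 2⁻ⁿ * vol K ≤ vol K`.
A set of lower affine dimension is first pulled back to `ℝ^k'` along an injective affine
parametrization of its affine span; antipodality is preserved by such pullbacks.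
-/

open Module MeasureTheory Measure Set AffineMap Function

variable {E : Type*}

section Module

variable [AddCommGroup E] [Module ℝ E]

def IsAntipodal (W : Set E) : Prop :=
  ∀ x ∈ W, ∀ y ∈ W, x ≠ y → ∃ f : E →ₗ[ℝ] ℝ, f x < f y ∧ ∀ w ∈ W, f x ≤ f w ∧ f w ≤ f y

theorem IsAntipodal.preimage {F : Type*} [AddCommGroup F] [Module ℝ F] {W : Set E}
    (hW : IsAntipodal W) {e : F →ᵃ[ℝ] E} (he : Injective e) : IsAntipodal (e ⁻¹' W) := by
  intro x hx y hy hxy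
  obtain ⟨f, hfxy, hf⟩ := hW _ hx _ hy (he.ne hxy)
  have hshift : ∀ v, (f ∘ₗ e.linear) v = f (e v) - f (e 0) := fun v => by
    rw [LinearMap.comp_apply, ← map_sub, ← vsub_eq_sub, ← e.linearMap_vsub, vsub_eq_sub, sub_zero]
  refine ⟨f ∘ₗ e.linear, ?_, fun w hw => ?_⟩
  · simp only [hshift]
    linarith
  · simp only [hshift]
    constructor <;> linarith [hf _ hw]

end Module

theorem finrank_vectorSpan_preimage_of_injective {k V₁ P₁ V₂ P₂ : Type*} [DivisionRing k]
    [AddCommGroup V₁] [Module k V₁] [AddTorsor V₁ P₁] [AddCommGroup V₂] [Module k V₂]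
    [AddTorsor V₂ P₂] {e : P₁ →ᵃ[k] P₂} (he : Injective e) {s : Set P₂} (hs : s ⊆ range e) :
    finrank k (vectorSpan k (e ⁻¹' s)) = finrank k (vectorSpan k s) := by
  conv_rhs => rw [← image_preimage_eq_of_subset hs, ← e.map_vectorSpan]
  exact (Submodule.equivMapOfInjective _ (e.linear_injective_iff.mpr he) _).finrank_eq

section Normed

variable [NormedAddCommGroup E] [NormedSpace ℝ E] [FiniteDimensional ℝ E]

section Haar

variable [MeasurableSpace E] [BorelSpace E] (μ : Measure E) [μ.IsAddHaarMeasure]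

theorem addHaar_preimage_singleton_of_ne_zero {f : E →ₗ[ℝ] ℝ} (hf : f ≠ 0) (c : ℝ) :
    μ (f ⁻¹' {c}) = 0 := by
  have hlevel : f ⁻¹' {c} = (affineSpan ℝ {c}).comap f.toAffineMap := by ext; simp
  rw [hlevel]
  refine addHaar_affineSubspace μ _ fun htop => hf (LinearMap.ext fun v => ?_)
  have hconst : ∀ v, f v = c := fun v => by
    simpa using (SetLike.ext_iff.mp htop v).mpr trivial
  rw [LinearMap.zero_apply, hconst v, ← hconst 0, map_zero]

theorem card_le_two_pow_finrank_of_pairwise_aedisjoint_homothety {K : Set E} (hK : IsCompact K)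
    (hK₀ : μ K ≠ 0) (s : Finset E) (hsub : ∀ c ∈ s, homothety c (2⁻¹ : ℝ) '' K ⊆ K)
    (hdisj : (s : Set E).Pairwise (AEDisjoint μ on fun c => homothety c (2⁻¹ : ℝ) '' K)) :
    s.card ≤ 2 ^ finrank ℝ E := by
  have hmeas : ∀ c ∈ s, NullMeasurableSet (homothety c (2⁻¹ : ℝ) '' K) μ := fun c _ =>
    (hK.image (homothety_continuous c _)).isClosed.measurableSet.nullMeasurableSet
  have hvol : ∀ c, μ (homothety c (2⁻¹ : ℝ) '' K) = (2 ^ finrank ℝ E)⁻¹ * μ K := fun c => by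
    rw [addHaar_image_homothety, abs_of_pos (by norm_num), ENNReal.ofReal_pow (by norm_num),
      ENNReal.ofReal_inv_of_pos two_pos, ENNReal.ofReal_ofNat, ENNReal.inv_pow]
  have hpack : (s.card : ENNReal) * (2 ^ finrank ℝ E)⁻¹ * μ K ≤ 1 * μ K :=
    calc (s.card : ENNReal) * (2 ^ finrank ℝ E)⁻¹ * μ K
        = ∑ c ∈ s, μ (homothety c (2⁻¹ : ℝ) '' K) := by
          simp only [hvol, Finset.sum_const, nsmul_eq_mul, mul_assoc]
      _ = μ (⋃ c ∈ s, homothety c (2⁻¹ : ℝ) '' K) := (measure_biUnion_finset₀ hdisj hmeas).symm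
      _ ≤ 1 * μ K := by
          rw [one_mul]
          exact measure_mono (iUnion₂_subset hsub)
  have hcard := (ENNReal.mul_le_mul_iff_left hK₀ hK.measure_lt_top.ne).mp hpack
  rw [ENNReal.mul_inv_le_iff (by positivity) (by simp), one_mul] at hcard
  exact_mod_cast hcard

theorem IsAntipodal.aedisjoint_homothety_convexHull {W : Set E} (hW : IsAntipodal W) {x y : E}
    (hx : x ∈ W) (hy : y ∈ W) (hxy : x ≠ y) :
    AEDisjoint μ (homothety x (2⁻¹ : ℝ) '' convexHull ℝ W)
      (homothety y (2⁻¹ : ℝ) '' convexHull ℝ W) := by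
  obtain ⟨f, hfxy, hf⟩ := hW x hx y hy hxy
  have hslab : convexHull ℝ W ⊆ {v | f x ≤ f v ∧ f v ≤ f y} :=
    convexHull_min hf ((convex_halfSpace_ge f.isLinear _).inter (convex_halfSpace_le f.isLinear _))
  have hf_homothety : ∀ c v, f (homothety c (2⁻¹ : ℝ) v) = (f c + f v) / 2 := fun c v => by
    rw [homothety_apply, vsub_eq_sub, vadd_eq_add, map_add, map_smul, map_sub, smul_eq_mul]
    ring
  have hf₀ : f ≠ 0 := by
    rintro rfl
    exact hfxy.ne rfl
  refine measure_mono_null ?_ (addHaar_preimage_singleton_of_ne_zero μ hf₀ ((f x + f y) / 2))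
  rintro _ ⟨⟨v, hv, rfl⟩, ⟨v', hv', hvv'⟩⟩
  obtain ⟨-, hv_le⟩ := hslab hv
  obtain ⟨hv'_ge, -⟩ := hslab hv'
  have hval := congrArg f hvv'
  simp only [mem_preimage, mem_singleton_iff, hf_homothety] at hval ⊢
  linarith

end Haar

theorem IsAntipodal.card_le_two_pow_finrank {W : Finset E} (hW : IsAntipodal (W : Set E))
    (hspan : affineSpan ℝ (W : Set E) = ⊤) : W.card ≤ 2 ^ finrank ℝ E := by
  borelize E
  have hconv := convex_convexHull ℝ (W : Set E)
  have hint : (interior (convexHull ℝ (W : Set E))).Nonempty :=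
    hconv.interior_nonempty_iff_affineSpan_eq_top.mpr (by rwa [affineSpan_convexHull])
  refine card_le_two_pow_finrank_of_pairwise_aedisjoint_homothety addHaar
    (W.finite_toSet.isCompact_convexHull ℝ) (measure_pos_of_nonempty_interior _ hint).ne' W
    (fun c hc => ?_) fun x hx y hy hxy => hW.aedisjoint_homothety_convexHull addHaar hx hy hxy
  rintro _ ⟨v, hv, rfl⟩
  rw [homothety_eq_lineMap]
  exact hconv.lineMap_mem (subset_convexHull ℝ _ hc) hv ⟨by norm_num, by norm_num⟩

end Normed

theorem IsAntipodal.card_le_two_pow_finrank_direction [AddCommGroup E] [Module ℝ E]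
    {W : Finset E} (hW : IsAntipodal (W : Set E)) :
    W.card ≤ 2 ^ finrank ℝ (affineSpan ℝ (W : Set E)).direction := by
  classical
  rcases W.eq_empty_or_nonempty with rfl | ⟨w₀, hw₀⟩
  · simp
  rw [direction_affineSpan]
  set D := vectorSpan ℝ (W : Set E)
  have : FiniteDimensional ℝ D := finiteDimensional_vectorSpan_of_finite ℝ W.finite_toSet
  let φ : EuclideanSpace ℝ (Fin (finrank ℝ D)) ≃ₗ[ℝ] D := LinearEquiv.ofFinrankEq _ _ (by simp)
  -- `e v = w₀ + φ v` parametrizes the affine span of `W`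
  let e : EuclideanSpace ℝ (Fin (finrank ℝ D)) →ᵃ[ℝ] E :=
    (AffineEquiv.constVAdd ℝ E w₀).toAffineMap.comp (D.subtype ∘ₗ φ.toLinearMap).toAffineMap
  have he : Injective e :=
    (AffineEquiv.constVAdd ℝ E w₀).injective.comp (Subtype.val_injective.comp φ.injective)
  have hrange : (W : Set E) ⊆ range e := fun w hw =>
    ⟨φ.symm ⟨w - w₀, vsub_mem_vectorSpan ℝ hw hw₀⟩, by simp [e]⟩
  have hspan : affineSpan ℝ (e ⁻¹' W) = ⊤ := by
    obtain ⟨v₀, hv₀⟩ := hrange hw₀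
    rw [AffineSubspace.affineSpan_eq_top_iff_vectorSpan_eq_top_of_nonempty _ _ _
      ⟨v₀, by simpa [hv₀]⟩]
    exact Submodule.eq_top_of_finrank_eq (by
      rw [finrank_vectorSpan_preimage_of_injective he hrange, finrank_euclideanSpace_fin])
  calc W.card = (W.preimage e he.injOn).card := by
        rw [Finset.card_preimage, Finset.filter_true_of_mem fun w hw => hrange hw]
    _ ≤ 2 ^ finrank ℝ D := by
      simpa using (IsAntipodal.card_le_two_pow_finrank (W := W.preimage e he.injOn)
        (by simpa using hW.preimage he) (by simpa using hspan))

theorem antipodal_card_le_two_pow_affDim_general (k k' : ℕ)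
    (W : Finset (EuclideanSpace ℝ (Fin k)))
    (hW : ∀ x ∈ W, ∀ y ∈ W, x ≠ y →
      ∃ f : EuclideanSpace ℝ (Fin k) →ₗ[ℝ] ℝ, f ≠ 0 ∧ f x < f y ∧
        ∀ w ∈ W, f x ≤ f w ∧ f w ≤ f y)
    (hdim : Module.finrank ℝ (affineSpan ℝ (W : Set (EuclideanSpace ℝ (Fin k)))).direction = k') :
    W.card ≤ 2 ^ k' :=
  hdim ▸ IsAntipodal.card_le_two_pow_finrank_direction fun x hx y hy hxy =>
    (hW x hx y hy hxy).imp fun _ hf => hf.2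

/-- A finite antipodal set in `ℝ^k` whose affine span has dimension `k'` has
at most `2 ^ k'` elements. -/
theorem antipodal_card_le_two_pow_affDim (k k' : ℕ) (hk' : k' ≤ k)
    (W : Finset (EuclideanSpace ℝ (Fin k)))
    (hW : ∀ x ∈ W, ∀ y ∈ W, x ≠ y →
      ∃ f : EuclideanSpace ℝ (Fin k) →ₗ[ℝ] ℝ, f ≠ 0 ∧ f x < f y ∧
        ∀ w ∈ W, f x ≤ f w ∧ f w ≤ f y)
    (hdim : Module.finrank ℝ (affineSpan ℝ (W : Set (EuclideanSpace ℝ (Fin k)))).direction = k') :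
    W.card ≤ 2 ^ k' :=
  antipodal_card_le_two_pow_affDim_general k k' W hW hdim
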